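/- arXiv:0801.3592 — 2 statements merged into one kernel-verified Lean document; each statement's English description precedes it below -/
import Mathlib

section
/- Let p ∈ ℝ[x1,x2] with p(0,0) = 1 and total degree m ≥ 1, with coefficients p_α for multi-indices α = (α1,α2), |α| ≤ m. For θ ∈ ℝ define the monic univariate polynomial q_θ(t) = ∑_{|α|≤m} p_α (2cos θ)^{α1} (2sin θ)^{α2} t^{m−α1−α2} (formally q_θ(t) = t^m p((2cos θ)/t, (2sin θ)/t)), and let H(θ) be its m×m Hermite matrix, H(θ)_{ij} = N_{i+j}(q_θ) for 0 ≤ i, j ≤ m−1, where N_k(q_θ) is the (real) sum of the k-th powers of the complex roots of q_θ counted with multiplicity. Then p satisfies the real zero condition at the origin if and only if H(θ) is positive semidefinite for every θ ∈ ℝ. -/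
/-!
For a multiset `M ⊆ ℂ`, the quadratic form of its Hermite matrix is
`v ↦ Re ∑_{w ∈ M} (∑ᵢ vᵢ wⁱ)²`, which is nonnegative when `M` is real. Conversely, if `M` is
closed under conjugation, has at most `m` distinct points and contains a non-real `x`, let `L` be
the Lagrange polynomial of these points which is `1` at `x` and `0` at the others, and let `v` be
the imaginary parts of its coefficients. Then `∑ᵢ vᵢ wⁱ = (L(w) - conj L(conj w)) / 2i` vanishes
at every point but `x` and `conj x`, where its square is `-1/4`, so the form takes a negative value.

The polynomial `q_θ` is the reflection `t^m P(1/t)` of `P(t) = p(t · (2 cos θ, 2 sin θ))`, and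
since `P(0) = 1` it is real-rooted exactly when `P` is. Finally every `z ≠ 0` is a positive
multiple of some `(2 cos θ, 2 sin θ)`, and scaling `z` by a real factor scales the roots of
`t ↦ p(t z)` by its inverse.
-/

open Polynomial ComplexConjugate
open scoped Matrix

lemma Complex.re_multiset_sum_map {α : Type*} (M : Multiset α) (f : α → ℂ) :
    (M.map f).sum.re = (M.map fun a => (f a).re).sum := by
  simpa using map_multiset_sum Complex.reAddGroupHom (M.map f)

lemma Complex.inv_im_eq_zero_iff (w : ℂ) : w⁻¹.im = 0 ↔ w.im = 0 := by
  rw [Complex.inv_im, neg_div, neg_eq_zero, div_eq_zero_iff, Complex.normSq_eq_zero]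
  exact ⟨fun h => h.elim id fun hw => by simp [hw], Or.inl⟩

lemma Complex.re_sq_ofReal_div_two_mul_I (r : ℝ) :
    (((r : ℂ) / (2 * Complex.I)) ^ 2).re = -(r ^ 2 / 4) := by
  rw [div_pow, mul_pow, Complex.I_sq, ← Complex.ofReal_pow]
  norm_num [Complex.div_re]
  rw [← Complex.ofReal_pow, Complex.ofReal_re]
  ring

namespace Polynomial

lemma sum_im_coeff_mul_pow {m : ℕ} {L : ℂ[X]} (hL : L.natDegree < m) (w : ℂ) :
    ∑ i : Fin m, ((L.coeff i).im : ℂ) * w ^ (i : ℕ) =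
      (L.eval w - conj (L.eval (conj w))) / (2 * Complex.I) := by
  rw [eval_eq_sum_range' hL, eval_eq_sum_range' hL, map_sum, ← Finset.sum_sub_distrib,
    Finset.sum_div, ← Fin.sum_univ_eq_sum_range]
  refine Finset.sum_congr rfl fun i _ => ?_
  rw [Complex.im_eq_sub_conj, map_mul, map_pow, Complex.conj_conj]
  ring

lemma exists_natDegree_lt_card_eval_eq_ite {K : Type*} [Field K] [DecidableEq K] {D : Finset K}
    {x : K} (hx : x ∈ D) :
    ∃ L : K[X], L.natDegree < D.card ∧ ∀ y ∈ D, L.eval y = if y = x then 1 else 0 := by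
  refine ⟨Lagrange.basis D id x, ?_, fun y hy => ?_⟩
  · rw [Lagrange.natDegree_basis (Set.injOn_id _) hx]
    exact Nat.sub_lt (Finset.card_pos.mpr ⟨x, hx⟩) one_pos
  · split_ifs with hyx
    · subst hyx
      exact Lagrange.eval_basis_self (v := id) (Set.injOn_id _) hy
    · exact Lagrange.eval_basis_of_ne (v := id) (Ne.symm hyx) hy

lemma reflect_sum {R ι : Type*} [Semiring R] (s : Finset ι) (f : ι → R[X]) (N : ℕ) :
    (∑ i ∈ s, f i).reflect N = ∑ i ∈ s, (f i).reflect N :=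
  map_sum (⟨⟨reflect N, reflect_zero⟩, fun f g => reflect_add f g N⟩ : R[X] →+ R[X]) f s

lemma isRoot_map_reflect_iff {R K : Type*} [CommSemiring R] [Field K] (i : R →+* K) {f : R[X]}
    {N : ℕ} (hdeg : f.natDegree ≤ N) {w : K} (hw : w ≠ 0) :
    ((f.reflect N).map i).IsRoot w ↔ (f.map i).IsRoot w⁻¹ := by
  let := invertibleOfNonzero (inv_ne_zero hw)
  rw [IsRoot.def, IsRoot.def, eval_map, eval_map, ← eval₂_reflect_eq_zero_iff i w⁻¹ N f hdeg,
    invOf_eq_inv, inv_inv]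

lemma conj_mem_roots_map {f : ℝ[X]} {w : ℂ} (hw : w ∈ (f.map (algebraMap ℝ ℂ)).roots) :
    conj w ∈ (f.map (algebraMap ℝ ℂ)).roots := by
  have hf : f.map (algebraMap ℝ ℂ) ≠ 0 := ne_zero_of_mem_roots hw
  rw [mem_roots hf, IsRoot.def, eval_map_algebraMap] at hw ⊢
  rw [aeval_conj, hw, map_zero]

end Polynomial

noncomputable def hermiteMatrix (M : Multiset ℂ) (m : ℕ) : Matrix (Fin m) (Fin m) ℝ :=
  Matrix.of fun i j => ((M.map fun z => z ^ ((i : ℕ) + (j : ℕ))).sum).re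

namespace hermiteMatrix

variable {M : Multiset ℂ} {m : ℕ}

lemma isHermitian (M : Multiset ℂ) (m : ℕ) : (hermiteMatrix M m).IsHermitian := by
  ext i j
  simp [hermiteMatrix, add_comm]

lemma dotProduct_mulVec (M : Multiset ℂ) (v : Fin m → ℝ) :
    v ⬝ᵥ (hermiteMatrix M m *ᵥ v) =
      ((M.map fun w => (∑ i, (v i : ℂ) * w ^ (i : ℕ)) ^ 2).sum).re := by
  have hsq : ∀ w : ℂ, (∑ i, (v i : ℂ) * w ^ (i : ℕ)) ^ 2 =
      ∑ i, ∑ j, ((v i * v j : ℝ) : ℂ) * w ^ ((i : ℕ) + (j : ℕ)) := fun w => by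
    simp only [sq, Finset.sum_mul_sum, pow_add, Complex.ofReal_mul]
    exact Finset.sum_congr rfl fun i _ => Finset.sum_congr rfl fun j _ => by ring
  simp only [hsq, Multiset.sum_map_sum, Multiset.sum_map_mul_left, Complex.re_sum,
    Complex.re_ofReal_mul, dotProduct, Matrix.mulVec, hermiteMatrix, Matrix.of_apply,
    Finset.mul_sum]
  exact Finset.sum_congr rfl fun i _ => Finset.sum_congr rfl fun j _ => by ring

lemma posSemidef (h : ∀ w ∈ M, w.im = 0) : (hermiteMatrix M m).PosSemidef := by
  refine .of_dotProduct_mulVec_nonneg (isHermitian M m) fun v => ?_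
  rw [star_trivial, dotProduct_mulVec, Complex.re_multiset_sum_map]
  refine Multiset.sum_nonneg fun _ hx => ?_
  obtain ⟨w, hw, rfl⟩ := Multiset.mem_map.mp hx
  rw [← Complex.re_add_im w, h w hw, Complex.ofReal_zero, zero_mul, add_zero]
  norm_cast
  exact sq_nonneg _

lemma not_posSemidef (hconj : ∀ w ∈ M, conj w ∈ M) (hcard : M.toFinset.card ≤ m)
    {x : ℂ} (hx : x ∈ M) (hxim : x.im ≠ 0) : ¬ (hermiteMatrix M m).PosSemidef := by
  classical
  obtain ⟨L, hLdeg, hL⟩ := exists_natDegree_lt_card_eval_eq_ite (Multiset.mem_toFinset.mpr hx)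
  set δ : ℂ → ℝ := fun y => if y = x then 1 else 0
  have hLδ : ∀ y ∈ M, L.eval y = δ y := fun y hy => by
    rw [hL y (Multiset.mem_toFinset.mpr hy)]
    split_ifs <;> simp [δ, *]
  set v : Fin m → ℝ := fun i => (L.coeff i).im
  have hterm : ∀ w ∈ M,
      ((∑ i, (v i : ℂ) * w ^ (i : ℕ)) ^ 2).re = -((δ w - δ (conj w)) ^ 2 / 4) := by
    intro w hw
    rw [sum_im_coeff_mul_pow (hLdeg.trans_le hcard), hLδ w hw, hLδ _ (hconj w hw),
      Complex.conj_ofReal, ← Complex.ofReal_sub, Complex.re_sq_ofReal_div_two_mul_I]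
  have hδx : δ x - δ (conj x) = 1 := by
    have hxx : conj x ≠ x := fun h => hxim (Complex.conj_eq_iff_im.mp h)
    simp [δ, hxx]
  have hrest : ((M.erase x).map fun w => -((δ w - δ (conj w)) ^ 2 / 4)).sum ≤ 0 := by
    refine (Multiset.sum_le_card_nsmul _ 0 fun r hr => ?_).trans (by simp)
    obtain ⟨w, -, rfl⟩ := Multiset.mem_map.mp hr
    have := sq_nonneg (δ w - δ (conj w))
    linarith
  have hneg : v ⬝ᵥ (hermiteMatrix M m *ᵥ v) < 0 := by
    rw [dotProduct_mulVec, Complex.re_multiset_sum_map, Multiset.map_congr rfl hterm,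
      ← Multiset.cons_erase hx, Multiset.map_cons, Multiset.sum_cons, hδx]
    linarith
  exact fun hH => (hH.dotProduct_mulVec_nonneg v).not_gt hneg

lemma posSemidef_iff (hconj : ∀ w ∈ M, conj w ∈ M) (hcard : M.toFinset.card ≤ m) :
    (hermiteMatrix M m).PosSemidef ↔ ∀ w ∈ M, w.im = 0 := by
  refine ⟨fun hH => ?_, posSemidef⟩
  by_contra! h
  obtain ⟨x, hx, hxim⟩ := h
  exact not_posSemidef hconj hcard hx hxim hH

end hermiteMatrix

def IsRealRooted (f : ℝ[X]) : Prop :=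
  ∀ w : ℂ, (f.map (algebraMap ℝ ℂ)).IsRoot w → w.im = 0

lemma posSemidef_hermiteMatrix_roots_iff {f : ℝ[X]} (hf : f ≠ 0) {m : ℕ}
    (hdeg : f.natDegree ≤ m) :
    (hermiteMatrix (f.map (algebraMap ℝ ℂ)).roots m).PosSemidef ↔ IsRealRooted f := by
  have hf' : f.map (algebraMap ℝ ℂ) ≠ 0 := Polynomial.map_ne_zero hf
  have hcard : (f.map (algebraMap ℝ ℂ)).roots.toFinset.card ≤ m :=
    (Multiset.toFinset_card_le _).trans <| (card_roots' _).trans <| (natDegree_map _).trans_le hdeg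
  rw [hermiteMatrix.posSemidef_iff (fun _ => conj_mem_roots_map) hcard]
  simp only [IsRealRooted, mem_roots hf']

lemma isRealRooted_reflect_iff {f : ℝ[X]} {N : ℕ} (hdeg : f.natDegree ≤ N)
    (h0 : f.coeff 0 ≠ 0) : IsRealRooted (f.reflect N) ↔ IsRealRooted f := by
  have hroot_ne : ∀ w : ℂ, (f.map (algebraMap ℝ ℂ)).IsRoot w → w ≠ 0 := by
    rintro w hw rfl
    rw [IsRoot.def, ← coeff_zero_eq_eval_zero, coeff_map] at hw
    exact h0 (by simpa using hw)
  constructor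
  · intro h w hw
    have hw0 := hroot_ne w hw
    rw [← inv_inv w] at hw
    rw [← Complex.inv_im_eq_zero_iff]
    exact h _ ((isRoot_map_reflect_iff _ hdeg (inv_ne_zero hw0)).mpr hw)
  · intro h w hw
    rcases eq_or_ne w 0 with rfl | hw0
    · rfl
    · rw [← Complex.inv_im_eq_zero_iff]
      exact h _ ((isRoot_map_reflect_iff _ hdeg hw0).mp hw)

lemma posSemidef_hermiteMatrix_roots_reflect_iff {f : ℝ[X]} {m : ℕ} (hdeg : f.natDegree ≤ m)
    (h0 : f.coeff 0 ≠ 0) :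
    (hermiteMatrix ((f.reflect m).map (algebraMap ℝ ℂ)).roots m).PosSemidef ↔
      IsRealRooted f := by
  have hcoeff : (f.reflect m).coeff m = f.coeff 0 := by simp [coeff_reflect]
  have hne : f.reflect m ≠ 0 := fun h => h0 (by rw [← hcoeff, h, coeff_zero])
  rw [posSemidef_hermiteMatrix_roots_iff hne (natDegree_reflect_le.trans (max_le le_rfl hdeg)),
    isRealRooted_reflect_iff hdeg h0]

section lineRestrict

variable {σ R : Type*} [CommSemiring R]

noncomputable def lineRestrict (p : MvPolynomial σ R) (z : σ → R) : R[X] :=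
  MvPolynomial.aeval (fun i => C (z i) * X) p

lemma aeval_lineRestrict {A : Type*} [CommSemiring A] [Algebra R A] (p : MvPolynomial σ R)
    (z : σ → R) (x : A) :
    aeval x (lineRestrict p z) = MvPolynomial.aeval (fun i => algebraMap R A (z i) * x) p := by
  rw [lineRestrict, MvPolynomial.comp_aeval_apply]
  simp

lemma aeval_lineRestrict_smul {A : Type*} [CommSemiring A] [Algebra R A] (p : MvPolynomial σ R)
    (c : R) (z : σ → R) (x : A) :
    aeval x (lineRestrict p (c • z)) = aeval (algebraMap R A c * x) (lineRestrict p z) := by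
  simp only [aeval_lineRestrict, Pi.smul_apply, smul_eq_mul, map_mul]
  congr 2 with i
  ring

lemma coeff_zero_lineRestrict (p : MvPolynomial σ R) (z : σ → R) :
    (lineRestrict p z).coeff 0 = MvPolynomial.eval 0 p := by
  rw [coeff_zero_eq_eval_zero, ← coe_aeval_eq_eval, aeval_lineRestrict]
  simp

lemma lineRestrict_eq_sum [Fintype σ] (p : MvPolynomial σ R) (z : σ → R) :
    lineRestrict p z =
      ∑ α ∈ p.support, C (MvPolynomial.coeff α p * ∏ i, z i ^ α i) * X ^ (∑ i, α i) := by
  rw [lineRestrict, MvPolynomial.aeval_def, MvPolynomial.eval₂_eq']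
  refine Finset.sum_congr rfl fun α _ => ?_
  simp only [mul_pow, Finset.prod_mul_distrib, ← map_pow, ← map_prod, Finset.prod_pow_eq_pow_sum,
    algebraMap_eq, map_mul, mul_assoc]

lemma natDegree_lineRestrict_le [Fintype σ] (p : MvPolynomial σ R) (z : σ → R) :
    (lineRestrict p z).natDegree ≤ p.totalDegree := by
  rw [lineRestrict_eq_sum]
  refine natDegree_sum_le_of_forall_le _ _ fun α hα =>
    (natDegree_C_mul_le _ _).trans <| natDegree_X_pow_le _ |>.trans ?_
  simpa [Finsupp.sum_fintype] using MvPolynomial.le_totalDegree hα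

lemma reflect_lineRestrict_eq_sum [Fintype σ] {p : MvPolynomial σ R} {N : ℕ}
    (hN : p.totalDegree ≤ N) (z : σ → R) :
    (lineRestrict p z).reflect N =
      ∑ α ∈ p.support, C (MvPolynomial.coeff α p * ∏ i, z i ^ α i) * X ^ (N - ∑ i, α i) := by
  rw [lineRestrict_eq_sum, reflect_sum]
  refine Finset.sum_congr rfl fun α hα => ?_
  have hα' : ∑ i, α i ≤ N := by
    simpa [Finsupp.sum_fintype] using (MvPolynomial.le_totalDegree hα).trans hN
  rw [reflect_C_mul_X_pow, revAt_le hα']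

end lineRestrict

lemma isRealRooted_lineRestrict_smul_iff {σ : Type*} (p : MvPolynomial σ ℝ) {c : ℝ}
    (hc : c ≠ 0) (z : σ → ℝ) :
    IsRealRooted (lineRestrict p (c • z)) ↔ IsRealRooted (lineRestrict p z) := by
  simp only [IsRealRooted, IsRoot.def, eval_map_algebraMap, aeval_lineRestrict_smul,
    Complex.coe_algebraMap]
  refine ⟨fun h w hw => ?_, fun h w hw => ?_⟩
  · have := h (w / c) (by rwa [mul_div_cancel₀ _ (Complex.ofReal_ne_zero.mpr hc)])
    rwa [Complex.div_ofReal_im, div_eq_zero_iff, or_iff_left hc] at this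
  · simpa [hc] using h _ hw

lemma isRealRooted_lineRestrict_zero {σ : Type*} {p : MvPolynomial σ ℝ}
    (hp0 : MvPolynomial.eval 0 p ≠ 0) : IsRealRooted (lineRestrict p 0) := by
  intro w hw
  rw [IsRoot.def, eval_map_algebraMap, aeval_lineRestrict] at hw
  simp only [Pi.zero_apply, map_zero, zero_mul, MvPolynomial.aeval_zero', map_eq_zero] at hw
  exact (hp0 (by rwa [MvPolynomial.eval_zero])).elim

lemma forall_isRealRooted_lineRestrict_iff {p : MvPolynomial (Fin 2) ℝ}
    (hp0 : MvPolynomial.eval 0 p ≠ 0) :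
    (∀ z, IsRealRooted (lineRestrict p z)) ↔
      ∀ θ : ℝ, IsRealRooted (lineRestrict p ![2 * Real.cos θ, 2 * Real.sin θ]) := by
  refine ⟨fun h θ => h _, fun h z => ?_⟩
  rcases eq_or_ne z 0 with rfl | hz
  · exact isRealRooted_lineRestrict_zero hp0
  set ζ : ℂ := ⟨z 0, z 1⟩
  have hζ : ζ ≠ 0 := fun h0 => hz (by
    ext i; fin_cases i
    exacts [congrArg Complex.re h0, congrArg Complex.im h0])
  have hpolar : z = (‖ζ‖ / 2) • ![2 * Real.cos ζ.arg, 2 * Real.sin ζ.arg] := by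
    ext i; fin_cases i
    · simp only [Fin.zero_eta, Fin.isValue, Pi.smul_apply, Matrix.cons_val_zero, smul_eq_mul]
      rw [show z 0 = ζ.re from rfl, ← Complex.norm_mul_cos_arg]
      ring
    · simp only [Fin.mk_one, Fin.isValue, Pi.smul_apply, Matrix.cons_val_one,
        Matrix.cons_val_fin_one, smul_eq_mul]
      rw [show z 1 = ζ.im from rfl, ← Complex.norm_mul_sin_arg]
      ring
  rw [hpolar, isRealRooted_lineRestrict_smul_iff p (by positivity)]
  exact h _

theorem stmt7_general (m : ℕ) (p : MvPolynomial (Fin 2) ℝ)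
    (hp0 : MvPolynomial.eval (0 : Fin 2 → ℝ) p = 1) (hdeg : p.totalDegree = m)
    (q : ℝ → Polynomial ℝ)
    (hq : ∀ θ : ℝ, q θ = ∑ α ∈ p.support,
      Polynomial.C (MvPolynomial.coeff α p *
        (2 * Real.cos θ) ^ (α 0) * (2 * Real.sin θ) ^ (α 1)) *
        Polynomial.X ^ (m - (α 0 + α 1)))
    (H : ℝ → Matrix (Fin m) (Fin m) ℝ)
    (hH : ∀ (θ : ℝ) (i j : Fin m), H θ i j =
      (((((q θ).map (algebraMap ℝ ℂ)).roots.map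
        (fun z => z ^ ((i : ℕ) + (j : ℕ)))).sum)).re) :
    (∀ z : Fin 2 → ℝ, ∀ w : ℂ,
        ((MvPolynomial.aeval (fun i : Fin 2 => Polynomial.C (z i) * Polynomial.X) p :
          Polynomial ℝ).map (algebraMap ℝ ℂ)).IsRoot w → w.im = 0) ↔
      (∀ θ : ℝ, (H θ).PosSemidef) := by
  have hp0' : MvPolynomial.eval 0 p ≠ 0 := by rw [hp0]; exact one_ne_zero
  have hq_reflect : ∀ θ, q θ = (lineRestrict p ![2 * Real.cos θ, 2 * Real.sin θ]).reflect m := by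
    intro θ
    rw [hq θ, reflect_lineRestrict_eq_sum hdeg.le]
    simp [Fin.prod_univ_two, Fin.sum_univ_two, mul_assoc]
  have hH_hermite : ∀ θ, H θ = hermiteMatrix ((q θ).map (algebraMap ℝ ℂ)).roots m :=
    fun θ => Matrix.ext (hH θ)
  change (∀ z, IsRealRooted (lineRestrict p z)) ↔ _
  rw [forall_isRealRooted_lineRestrict_iff hp0']
  refine forall_congr' fun θ => ?_
  rw [hH_hermite, hq_reflect, posSemidef_hermiteMatrix_roots_reflect_iff
    (hdeg ▸ natDegree_lineRestrict_le p _) (by rwa [coeff_zero_lineRestrict])]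

/-- Let `p ∈ ℝ[x1,x2]` with `p(0,0) = 1` and total degree `m ≥ 1`. For
`θ ∈ ℝ` let `qθ(t) = ∑_{|α|≤m} p_α (2 cos θ)^{α1} (2 sin θ)^{α2} t^{m−α1−α2}` (formally
`qθ(t) = t^m p((2cos θ)/t, (2sin θ)/t)`), and let `H θ` be its `m × m` Hermite matrix,
`(H θ) i j = N_{i+j}(qθ)`, the (real) sum of the `(i+j)`-th powers of the complex roots
of `qθ` counted with multiplicity. Then `p` satisfies the real zero condition at the
origin if and only if `H θ` is positive semidefinite for every `θ ∈ ℝ`. -/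
theorem stmt7 (m : ℕ) (hm : 1 ≤ m) (p : MvPolynomial (Fin 2) ℝ)
    (hp0 : MvPolynomial.eval (0 : Fin 2 → ℝ) p = 1) (hdeg : p.totalDegree = m)
    (q : ℝ → Polynomial ℝ)
    (hq : ∀ θ : ℝ, q θ = ∑ α ∈ p.support,
      Polynomial.C (MvPolynomial.coeff α p *
        (2 * Real.cos θ) ^ (α 0) * (2 * Real.sin θ) ^ (α 1)) *
        Polynomial.X ^ (m - (α 0 + α 1)))
    (H : ℝ → Matrix (Fin m) (Fin m) ℝ)
    (hH : ∀ (θ : ℝ) (i j : Fin m), H θ i j =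
      (((((q θ).map (algebraMap ℝ ℂ)).roots.map
        (fun z => z ^ ((i : ℕ) + (j : ℕ)))).sum)).re) :
    (∀ z : Fin 2 → ℝ, ∀ w : ℂ,
        ((MvPolynomial.aeval (fun i : Fin 2 => Polynomial.C (z i) * Polynomial.X) p :
          Polynomial ℝ).map (algebraMap ℝ ℂ)).IsRoot w → w.im = 0) ↔
      (∀ θ : ℝ, (H θ).PosSemidef) :=
  stmt7_general m p hp0 hdeg q hq H hH
end

section
/- Let q1, q2 ∈ ℝ[u] each have degree exactly m ≥ 1. Then the Bézout matrix B_m(q1,q2) is definite (positive definite or negative definite) if and only if all roots of q1 and of q2 are real and simple, q1 and q2 have no common root, and the roots of q1 and q2 strictly interlace, i.e., when the m roots of q1 and the m roots of q2 are listed together in increasing order they alternate between roots of q1 and roots of q2. -/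
/-- The Bézout matrix `B_m(g,h)` of two univariate polynomials of degree at most `m`:
the `m × m` symmetric matrix `(b_{kl})` determined by
`g(u)h(v) − g(v)h(u) = (u − v) ∑_{k,l=0}^{m−1} b_{kl} u^k v^l`. Working in `R[v][u]`
(outer variable `u`, inner variable `v`), `u − v` is the monic polynomial `X − C X`, and
`b_{kl}` is the coefficient of `u^k v^l` of the exact quotient. -/
noncomputable def bezoutMatrix (R : Type*) [CommRing R] (m : ℕ) (g h : Polynomial R) :
    Matrix (Fin m) (Fin m) R :=
  Matrix.of fun k l : Fin m =>
    (((g.map (Polynomial.C : R →+* Polynomial R) * Polynomial.C h -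
        Polynomial.C g * h.map (Polynomial.C : R →+* Polynomial R)) /ₘ
      (Polynomial.X - Polynomial.C Polynomial.X)).coeff (k : ℕ)).coeff (l : ℕ)

/-!
The Bézoutian `B(u, v) = (g(u) h(v) - g(v) h(u)) / (u - v)` is the quadratic form of `B_m(g, h)`
evaluated on the moment vectors `(u^k)_k`, and on the diagonal it is the Wronskian `g' h - g h'`.

If `B_m(g, h)` is definite, this Wronskian never vanishes, so the roots of `g` and `h` are simple
and not shared. A non-real root `z` is impossible, since `B(z̄, z)` is the Hermitian form of the
matrix at `(z̄^l)_l` but vanishes because `z̄` is a root too. At the roots of `g` the Wronskian is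
`g' h`, and `g'` alternates in sign along the simple roots of `g`; hence so does `h`, which thus has
a root between any two consecutive roots of `g`. Counting roots then forces interlacing.

Conversely, conjugating `B_m(g, h)` by the Vandermonde matrix of the roots `b_j` of `h`
diagonalises it, with entries `-g(b_j) h'(b_j)`. Writing `g` and `h'` as products over the roots,
each entry is a fixed constant times `a_j - b_j` times a positive product when the roots
interlace, so all entries have the same sign.
-/


open Polynomial Polynomial.Bivariate

namespace Polynomial

section Bezoutian

variable {R : Type*} [CommRing R]

noncomputable def bezoutian (g h : R[X]) : R[X][X] :=
  (g.map C * C h - C g * h.map C) /ₘ (X - C X)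

theorem X_sub_C_X_mul_bezoutian (g h : R[X]) :
    (X - C X) * bezoutian g h = g.map C * C h - C g * h.map C := by
  have hX : (g.map C * C h - C g * h.map C).eval (X : R[X]) = 0 := by
    simp [eval_map, eval₂_C_X, mul_comm]
  have := modByMonic_add_div (g.map C * C h - C g * h.map C) (X - C X)
  rwa [modByMonic_X_sub_C_eq_C_eval, hX, map_zero, zero_add] at this

theorem eq_bezoutian_of_X_sub_C_X_mul {g h : R[X]} {p : R[X][X]}
    (hp : (X - C X) * p = g.map C * C h - C g * h.map C) : p = bezoutian g h :=
  (monic_X_sub_C (X : R[X])).isRegular.left (hp.trans (X_sub_C_X_mul_bezoutian g h).symm)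

theorem neg_bezoutian (g h : R[X]) : -bezoutian g h = bezoutian h g := by
  refine eq_bezoutian_of_X_sub_C_X_mul ?_
  linear_combination -X_sub_C_X_mul_bezoutian g h

theorem Bivariate.swap_bezoutian (g h : R[X]) : swap (bezoutian g h) = bezoutian g h := by
  refine eq_bezoutian_of_X_sub_C_X_mul ?_
  have := congrArg swap (X_sub_C_X_mul_bezoutian g h)
  simp only [map_mul, map_sub, Bivariate.swap_C, Bivariate.swap_map_C, Bivariate.swap_Y,
    map_X] at this
  linear_combination -this

theorem Bivariate.coeff_coeff_swap (p : R[X][X]) (k l : ℕ) :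
    ((swap p).coeff k).coeff l = (p.coeff l).coeff k := by
  induction p using Polynomial.induction_on' with
  | add p q hp hq => simp [hp, hq]
  | monomial n a =>
    induction a using Polynomial.induction_on' with
    | add a b ha hb => simp only [(monomial n).map_add, map_add, coeff_add, ha, hb]
    | monomial j r =>
      rw [Bivariate.swap_monomial_monomial]
      by_cases hj : j = k <;> by_cases hn : n = l <;> simp [coeff_monomial, hj, hn]

theorem map_bezoutian {S : Type*} [CommRing S] (f : R →+* S) (g h : R[X]) :
    (bezoutian g h).map (mapRingHom f) = bezoutian (g.map f) (h.map f) := by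
  refine eq_bezoutian_of_X_sub_C_X_mul ?_
  have hC : (mapRingHom f).comp (C : R →+* R[X]) = (C : S →+* S[X]).comp f := by
    ext; simp
  have := congrArg (map (mapRingHom f)) (X_sub_C_X_mul_bezoutian g h)
  simp only [Polynomial.map_mul, Polynomial.map_sub, map_X, map_C, coe_mapRingHom,
    Polynomial.map_map, hC] at this
  rwa [Polynomial.map_map, Polynomial.map_map]

-- `evalEval x y` substitutes `x` for the inner variable `v` and `y` for the outer variable `u`.
theorem mul_evalEval_bezoutian (g h : R[X]) (x y : R) :
    (y - x) * (bezoutian g h).evalEval x y = g.eval y * h.eval x - g.eval x * h.eval y := by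
  have := congrArg (evalEval x y) (X_sub_C_X_mul_bezoutian g h)
  simpa [evalEval_mul, evalEval_sub, evalEval_X, evalEval_C, evalEval_map_C] using this

theorem evalEval_bezoutian_self (g h : R[X]) (x : R) :
    (bezoutian g h).evalEval x x = (wronskian h g).eval x := by
  -- differentiate `(u - v) B(u, v) = g(u) h(v) - g(v) h(u)` in `u`, then put `u = v`
  have := congrArg (fun p => (derivative p).evalEval x x) (X_sub_C_X_mul_bezoutian g h)
  simp only [derivative_mul, derivative_sub, derivative_X, derivative_C, derivative_map,
    evalEval_add, evalEval_mul, evalEval_sub, evalEval_X, evalEval_C, evalEval_map_C, eval_X,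
    sub_self, zero_mul, mul_zero, add_zero, zero_add, sub_zero, one_mul] at this
  rw [this, wronskian, eval_sub, eval_mul, eval_mul]
  ring

theorem natDegree_bezoutian_lt [Nontrivial R] {m : ℕ} (hm : 1 ≤ m) {g h : R[X]}
    (hg : g.natDegree ≤ m) (hh : h.natDegree ≤ m) : (bezoutian g h).natDegree < m := by
  have hnum : (g.map C * C h - C g * h.map C).natDegree ≤ m := by
    refine (natDegree_sub_le _ _).trans (max_le ?_ ?_) <;>
      refine natDegree_mul_le.trans ?_ <;> simpa using natDegree_map_le.trans ‹_›
  have := natDegree_divByMonic (g.map C * C h - C g * h.map C) (monic_X_sub_C (X : R[X]))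
  rw [natDegree_X_sub_C] at this
  rw [bezoutian, this]
  omega

theorem natDegree_coeff_bezoutian_lt [Nontrivial R] {m : ℕ} (hm : 1 ≤ m) {g h : R[X]}
    (hg : g.natDegree ≤ m) (hh : h.natDegree ≤ m) (k : ℕ) :
    ((bezoutian g h).coeff k).natDegree < m := by
  suffices ((bezoutian g h).coeff k).natDegree ≤ m - 1 by omega
  refine natDegree_le_iff_coeff_eq_zero.mpr fun l hl => ?_
  rw [← Bivariate.swap_bezoutian, Bivariate.coeff_coeff_swap,
    coeff_eq_zero_of_natDegree_lt ((natDegree_bezoutian_lt hm hg hh).trans_le (by omega)),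
    coeff_zero]

end Bezoutian

section Roots

open Finset Lagrange

variable {ι : Type*} [Fintype ι]

theorem eq_C_leadingCoeff_mul_nodal {R : Type*} [CommRing R] [IsDomain R] {p : R[X]}
    {v : ι → R} (hv : Function.Injective v) (hroot : ∀ i, p.IsRoot (v i))
    (hdeg : p.natDegree = Fintype.card ι) : p = C p.leadingCoeff * nodal univ v := by
  rcases eq_or_ne p 0 with rfl | hp
  · simp
  have hle : univ.val.map v ≤ p.roots := by
    refine (Multiset.le_iff_subset (univ.nodup.map hv)).mpr fun x hx => ?_
    obtain ⟨i, -, rfl⟩ := Multiset.mem_map.mp hx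
    exact (mem_roots hp).mpr (hroot i)
  have hroots : p.roots = univ.val.map v :=
    (Multiset.eq_of_le_of_card_le hle (by simpa [hdeg] using p.card_roots')).symm
  have := C_leadingCoeff_mul_prod_multiset_X_sub_C (p := p) (by simp [hroots, hdeg])
  rw [hroots, Multiset.map_map] at this
  exact this.symm

theorem eval_eq_leadingCoeff_mul_prod {R : Type*} [CommRing R] [IsDomain R] {p : R[X]}
    {v : ι → R} (hv : Function.Injective v) (hroot : ∀ i, p.IsRoot (v i))
    (hdeg : p.natDegree = Fintype.card ι) (x : R) :
    p.eval x = p.leadingCoeff * ∏ i, (x - v i) := by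
  conv_lhs => rw [eq_C_leadingCoeff_mul_nodal hv hroot hdeg]
  rw [eval_mul, eval_C, eval_nodal]

theorem eval_derivative_eq_leadingCoeff_mul_prod_erase [DecidableEq ι] {R : Type*}
    [CommRing R] [IsDomain R] {p : R[X]} {v : ι → R} (hv : Function.Injective v)
    (hroot : ∀ i, p.IsRoot (v i)) (hdeg : p.natDegree = Fintype.card ι) (j : ι) :
    p.derivative.eval (v j) = p.leadingCoeff * ∏ i ∈ univ.erase j, (v j - v i) := by
  conv_lhs => rw [eq_C_leadingCoeff_mul_nodal hv hroot hdeg]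
  rw [derivative_C_mul, eval_mul, eval_C, eval_nodal_derivative_eval_node_eq (mem_univ j),
    eval_nodal]

theorem exists_strictMono_of_roots_nodup {R : Type*} [CommRing R] [IsDomain R]
    [LinearOrder R] {p : R[X]} {m : ℕ} (hp : p ≠ 0) (hcard : p.roots.card = m)
    (hnodup : p.roots.Nodup) :
    ∃ a : Fin m → R, StrictMono a ∧ (∀ i, p.IsRoot (a i)) ∧
      ∀ x, p.IsRoot x → x ∈ Set.range a := by
  have hs : p.roots.toFinset.card = m := by rw [Multiset.toFinset_card_of_nodup hnodup, hcard]
  refine ⟨p.roots.toFinset.orderEmbOfFin hs, (p.roots.toFinset.orderEmbOfFin hs).strictMono,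
    fun i => isRoot_of_mem_roots (Multiset.mem_toFinset.mp (Finset.orderEmbOfFin_mem _ hs i)),
    fun x hx => ?_⟩
  rw [Finset.range_orderEmbOfFin]
  simpa [mem_roots hp] using hx

theorem exists_isRoot_mem_Ioo_of_eval_mul_eval_neg {p : ℝ[X]} {x y : ℝ} (hxy : x ≤ y)
    (h : p.eval x * p.eval y < 0) : ∃ z ∈ Set.Ioo x y, p.IsRoot z := by
  have hx : p.eval x ≠ 0 := fun h0 => by simp [h0] at h
  obtain ⟨z, hz, hz0⟩ := intermediate_value_Ioo' hxy (p * C (p.eval x)).continuous.continuousOn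
    (show (0 : ℝ) ∈ Set.Ioo _ _ by
      simp only [eval_mul, eval_C, Set.mem_Ioo]
      exact ⟨by linarith, mul_self_pos.mpr hx⟩)
  simp only [eval_mul, eval_C, mul_eq_zero, hx, or_false] at hz0
  exact ⟨z, hz, hz0⟩

theorem card_roots_eq_natDegree_of_forall_im_eq_zero {p : ℝ[X]}
    (h : ∀ z : ℂ, aeval z p = 0 → z.im = 0) : p.roots.card = p.natDegree := by
  classical
  have := filter_roots_map_range_eq_map_roots (algebraMap ℝ ℂ).injective p
  rw [Multiset.filter_eq_self.mpr fun z hz => ?_] at this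
  · rw [← Multiset.card_map (algebraMap ℝ ℂ), ← this, IsAlgClosed.card_roots_eq_natDegree,
      natDegree_map]
  · have hz := h z (by simpa [eval_map_algebraMap] using isRoot_of_mem_roots hz)
    exact ⟨z.re, Complex.ext (by simp) (by simp [hz])⟩

end Roots

end Polynomial

section BezoutMatrix

open Matrix

variable {R : Type*} [CommRing R] {m : ℕ}

theorem bezoutMatrix_apply (g h : R[X]) (k l : Fin m) :
    bezoutMatrix R m g h k l = ((bezoutian g h).coeff k).coeff l := rfl

theorem neg_bezoutMatrix (g h : R[X]) : -bezoutMatrix R m g h = bezoutMatrix R m h g := by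
  ext k l
  rw [Matrix.neg_apply, bezoutMatrix_apply, bezoutMatrix_apply, ← neg_bezoutian g h, coeff_neg,
    coeff_neg]

theorem bezoutMatrix_map {S : Type*} [CommRing S] (f : R →+* S) (g h : R[X]) :
    bezoutMatrix S m (g.map f) (h.map f) = (bezoutMatrix R m g h).map f := by
  ext k l
  simp [bezoutMatrix_apply, ← map_bezoutian]

theorem dotProduct_bezoutMatrix_mulVec [Nontrivial R] (hm : 1 ≤ m) {g h : R[X]}
    (hg : g.natDegree ≤ m) (hh : h.natDegree ≤ m) (x y : R) :
    (fun k : Fin m => x ^ (k : ℕ)) ⬝ᵥ bezoutMatrix R m g h *ᵥ (fun l : Fin m => y ^ (l : ℕ)) =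
      (bezoutian g h).evalEval y x := by
  rw [evalEval, eval_eq_sum_range' (natDegree_bezoutian_lt hm hg hh), eval_finsetSum,
    ← Fin.sum_univ_eq_sum_range]
  refine Finset.sum_congr rfl fun k _ => ?_
  rw [eval_mul, eval_pow, eval_C, eval_eq_sum_range' (natDegree_coeff_bezoutian_lt hm hg hh k),
    ← Fin.sum_univ_eq_sum_range, Matrix.mulVec, dotProduct, Finset.mul_sum, Finset.sum_mul]
  refine Finset.sum_congr rfl fun l _ => ?_
  rw [bezoutMatrix_apply]
  ring

end BezoutMatrix

namespace Matrix

variable {n : Type*}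

def IsDefinite {R : Type*} [CommRing R] [PartialOrder R] [StarRing R] (A : Matrix n n R) :
    Prop :=
  A.PosDef ∨ (-A).PosDef

theorem IsDefinite.neg {R : Type*} [CommRing R] [PartialOrder R] [StarRing R]
    {A : Matrix n n R} (hA : A.IsDefinite) : (-A).IsDefinite := by
  rw [IsDefinite, neg_neg]
  exact hA.symm

variable [Fintype n]

theorem IsUnit.isDefinite_star_right_conjugate_iff {R : Type*} [DecidableEq n] [CommRing R]
    [PartialOrder R] [StarRing R] {A U : Matrix n n R} (hU : IsUnit U) :
    (U * A * star U).IsDefinite ↔ A.IsDefinite := by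
  rw [IsDefinite, IsDefinite, ← Matrix.IsUnit.posDef_star_right_conjugate_iff hU (x := -A),
    mul_neg, neg_mul, Matrix.IsUnit.posDef_star_right_conjugate_iff hU]

theorem vandermonde_mul_mul_star_apply {R : Type*} [CommRing R] [StarRing R]
    [TrivialStar R] {m : ℕ} (v : Fin m → R) (A : Matrix (Fin m) (Fin m) R) (i j : Fin m) :
    (vandermonde v * A * star (vandermonde v)) i j =
      (fun k : Fin m => v i ^ (k : ℕ)) ⬝ᵥ A *ᵥ (fun l : Fin m => v j ^ (l : ℕ)) := by
  simp only [mul_apply, star_apply, star_trivial, vandermonde_apply, dotProduct, mulVec,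
    Finset.mul_sum, Finset.sum_mul]
  rw [Finset.sum_comm]
  refine Finset.sum_congr rfl fun k _ => Finset.sum_congr rfl fun l _ => ?_
  ring

section Real

variable {A : Matrix n n ℝ}

theorem IsDefinite.mul_dotProduct_mulVec_pos (hA : A.IsDefinite) {x y : n → ℝ} (hx : x ≠ 0)
    (hy : y ≠ 0) : 0 < (x ⬝ᵥ A *ᵥ x) * (y ⬝ᵥ A *ᵥ y) := by
  rcases hA with hA | hA
  · exact mul_pos (by simpa using hA.dotProduct_mulVec_pos hx)
      (by simpa using hA.dotProduct_mulVec_pos hy)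
  · have hx' := hA.dotProduct_mulVec_pos hx
    have hy' := hA.dotProduct_mulVec_pos hy
    simp only [star_trivial, neg_mulVec, dotProduct_neg, neg_pos] at hx' hy'
    exact mul_pos_of_neg_of_neg hx' hy'

theorem PosDef.dotProduct_mulVec_add_pos (hA : A.PosDef) {u v : n → ℝ}
    (huv : u ≠ 0 ∨ v ≠ 0) :
    0 < u ⬝ᵥ A *ᵥ u + v ⬝ᵥ A *ᵥ v := by
  have hu := hA.posSemidef.dotProduct_mulVec_nonneg u
  have hv := hA.posSemidef.dotProduct_mulVec_nonneg v
  rw [star_trivial] at hu hv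
  rcases huv with h | h <;>
  · have := hA.dotProduct_mulVec_pos h
    rw [star_trivial] at this
    linarith

theorem re_star_dotProduct_map_algebraMap_mulVec (A : Matrix n n ℝ) (w : n → ℂ) :
    (star w ⬝ᵥ A.map (algebraMap ℝ ℂ) *ᵥ w).re =
      (fun i => (w i).re) ⬝ᵥ A *ᵥ (fun i => (w i).re) +
        (fun i => (w i).im) ⬝ᵥ A *ᵥ (fun i => (w i).im) := by
  simp only [dotProduct, mulVec, Complex.re_sum, Finset.mul_sum, ← Finset.sum_add_distrib]
  refine Finset.sum_congr rfl fun i _ => Finset.sum_congr rfl fun j _ => ?_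
  simp only [Pi.star_apply, Complex.star_def, map_apply, Complex.coe_algebraMap, Complex.mul_re,
    Complex.conj_re, Complex.conj_im, Complex.mul_im, Complex.ofReal_re, Complex.ofReal_im]
  ring

theorem IsDefinite.star_dotProduct_map_algebraMap_mulVec_ne_zero (hA : A.IsDefinite) {w : n → ℂ}
    (hw : w ≠ 0) : star w ⬝ᵥ A.map (algebraMap ℝ ℂ) *ᵥ w ≠ 0 := by
  have hre : (fun i => (w i).re) ≠ 0 ∨ (fun i => (w i).im) ≠ 0 := by
    by_contra! h
    exact hw (funext fun i => Complex.ext (congrFun h.1 i) (congrFun h.2 i))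
  intro h0
  have := congrArg Complex.re h0
  rw [re_star_dotProduct_map_algebraMap_mulVec, Complex.zero_re] at this
  rcases hA with hA | hA
  · exact (hA.dotProduct_mulVec_add_pos hre).ne' this
  · have := hA.dotProduct_mulVec_add_pos hre
    simp only [neg_mulVec, dotProduct_neg] at this
    linarith

theorem isDefinite_diagonal_of_mul_pos [DecidableEq n]
    {d : n → ℝ} (hd : ∀ i j, 0 < d i * d j) : (diagonal d).IsDefinite := by
  by_cases hpos : ∃ i, 0 < d i
  · obtain ⟨i, hi⟩ := hpos
    exact Or.inl (PosDef.diagonal fun j => pos_of_mul_pos_right (hd i j) hi.le)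
  · simp only [not_exists, not_lt] at hpos
    refine Or.inr ?_
    rw [diagonal_neg]
    exact PosDef.diagonal fun j =>
      neg_pos.mpr ((hpos j).lt_of_ne fun h0 => by simpa [h0] using hd j j)

end Real

end Matrix

section Interlacing

open Finset

variable {α : Type*} {m : ℕ}

def Interlaces [LT α] (a b : Fin m → α) : Prop :=
  ∀ i : Fin m, a i < b i ∧ ∀ h : (i : ℕ) + 1 < m, b i < a ⟨(i : ℕ) + 1, h⟩

variable [LinearOrder α] {a b : Fin m → α}

theorem Interlaces.lt_of_lt (h : Interlaces a b) (ha : Monotone a) {i j : Fin m} (hij : i < j) :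
    b i < a j :=
  ((h i).2 (by omega)).trans_le (ha (Fin.le_def.mpr (Fin.lt_def.mp hij)))

theorem Interlaces.max_lt_min (h : Interlaces a b) (ha : Monotone a) {i j : Fin m}
    (hij : i < j) : max (a i) (b i) < min (a j) (b j) := by
  rw [max_eq_right (h i).1.le, min_eq_left (h j).1.le]
  exact h.lt_of_lt ha hij

theorem max_lt_min_of_interlaces (hint : Interlaces a b ∨ Interlaces b a) (ha : Monotone a)
    (hb : Monotone b) {i j : Fin m} (hij : i < j) : max (a i) (b i) < min (a j) (b j) := by
  rcases hint with h | h
  · exact h.max_lt_min ha hij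
  · simpa only [max_comm, min_comm] using h.max_lt_min hb hij

theorem card_filter_lt_eq_add_one (ha : StrictMono a) (hm : 0 < m)
    (h0 : b ⟨0, hm⟩ < a ⟨0, hm⟩)
    (hmid : ∀ (i : Fin m) (h : (i : ℕ) + 1 < m),
      ∃ j, b j ∈ Set.Ioo (a i) (a ⟨(i : ℕ) + 1, h⟩))
    (i : Fin m) : #{j | b j < a i} = (i : ℕ) + 1 := by
  have hpos : ∀ i, 0 < #{j | b j < a i} := fun i =>
    card_pos.mpr ⟨⟨0, hm⟩, by simpa using h0.trans_le (ha.monotone (Nat.zero_le i))⟩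
  have hle : ∀ i, #{j | b j < a i} ≤ m := fun i => (card_filter_le _ _).trans_eq (by simp)
  have hmono : ∀ i k, i < k → #{j | b j < a i} < #{j | b j < a k} := fun i k hik => by
    obtain ⟨j, hj⟩ := hmid i (by omega)
    refine card_lt_card ((ssubset_iff_of_subset fun l hl => ?_).mpr ⟨j, ?_, ?_⟩)
    · simp only [mem_filter, mem_univ, true_and] at hl ⊢
      exact hl.trans (ha hik)
    · simpa using hj.2.trans_le (ha.monotone (Nat.succ_le_of_lt hik))
    · simp [hj.1.le]
  -- the counts increase strictly along `Fin m` and lie in `[1, m]`, so they are `i ↦ i + 1`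
  have hid := StrictMono.eq_id
    (f := fun i : Fin m => ⟨#{j | b j < a i} - 1, by have := hle i; omega⟩)
    fun i k hik => Fin.mk_lt_mk.mpr (by have := hmono i k hik; have := hpos i; omega)
  have : #{j | b j < a i} - 1 = i := congrArg Fin.val (congrFun hid i)
  have := hpos i
  omega

theorem interlaces_of_lt (ha : StrictMono a) (hb : StrictMono b) (hne : ∀ i j, a i ≠ b j)
    (hm : 0 < m) (h0 : b ⟨0, hm⟩ < a ⟨0, hm⟩)
    (hmid : ∀ (i : Fin m) (h : (i : ℕ) + 1 < m),
      ∃ j, b j ∈ Set.Ioo (a i) (a ⟨(i : ℕ) + 1, h⟩)) :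
    Interlaces b a := by
  have hcard := card_filter_lt_eq_add_one ha hm h0 hmid
  refine fun i => ⟨?_, fun h => ?_⟩
  · by_contra! hi
    have hsub : univ.filter (fun j => b j < a i) ⊆ Iio i := fun j hj => by
      simp only [mem_filter, mem_univ, true_and] at hj
      exact mem_Iio.mpr (hb.lt_iff_lt.mp (hj.trans (lt_of_le_of_ne hi (hne i i))))
    have := card_le_card hsub
    rw [hcard, Fin.card_Iio] at this
    omega
  · by_contra! hi
    have hsub : Iic ⟨(i : ℕ) + 1, h⟩ ⊆ univ.filter (fun j => b j < a i) := fun j hj => by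
      simp only [mem_filter, mem_univ, true_and]
      exact (hb.monotone (mem_Iic.mp hj)).trans_lt
        (lt_of_le_of_ne hi fun he => hne i _ he.symm)
    have := card_le_card hsub
    rw [hcard, Fin.card_Iic] at this
    simp at this

theorem interlaces_or_interlaces (ha : StrictMono a) (hb : StrictMono b)
    (hne : ∀ i j, a i ≠ b j)
    (hab : ∀ (i : Fin m) (h : (i : ℕ) + 1 < m),
      ∃ j, b j ∈ Set.Ioo (a i) (a ⟨(i : ℕ) + 1, h⟩))
    (hba : ∀ (j : Fin m) (h : (j : ℕ) + 1 < m),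
      ∃ i, a i ∈ Set.Ioo (b j) (b ⟨(j : ℕ) + 1, h⟩)) :
    Interlaces a b ∨ Interlaces b a := by
  rcases Nat.eq_zero_or_pos m with rfl | hm
  · exact Or.inl fun i => i.elim0
  rcases lt_or_gt_of_ne (hne ⟨0, hm⟩ ⟨0, hm⟩) with h0 | h0
  · exact Or.inl (interlaces_of_lt hb ha (fun i j => (hne j i).symm) hm h0 hba)
  · exact Or.inr (interlaces_of_lt ha hb hne hm h0 hab)

end Interlacing

section Signs

open Finset

variable {ι : Type*} [Fintype ι] {K : Type*} [Field K] [LinearOrder K] [IsStrictOrderedRing K]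

theorem StrictMono.prod_erase_sub_mul_prod_erase_sub_neg [LinearOrder ι] {a : ι → K}
    (ha : StrictMono a) {i j : ι} (hij : i ⋖ j) :
    (∏ k ∈ univ.erase i, (a i - a k)) * ∏ k ∈ univ.erase j, (a j - a k) < 0 := by
  have hj : j ∈ univ.erase i := mem_erase.mpr ⟨hij.lt.ne', mem_univ j⟩
  have hi : i ∈ univ.erase j := mem_erase.mpr ⟨hij.lt.ne, mem_univ i⟩
  rw [← mul_prod_erase _ _ hj, ← mul_prod_erase _ _ hi, erase_right_comm,
    mul_mul_mul_comm, ← prod_mul_distrib]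
  refine mul_neg_of_neg_of_pos (mul_neg_of_neg_of_pos (by linarith [ha hij.lt])
    (by linarith [ha hij.lt])) (prod_pos fun k hk => ?_)
  simp only [mem_erase, mem_univ, and_true] at hk
  rcases lt_or_gt_of_ne hk.1 with hki | hik
  · exact mul_pos (by linarith [ha hki]) (by linarith [ha (hki.trans hij.lt)])
  · have hjk : j < k := lt_of_le_of_ne (hij.ge_of_gt hik) (Ne.symm hk.2)
    exact mul_pos_of_neg_of_neg (by linarith [ha hik]) (by linarith [ha hjk])

theorem Finset.prod_sub_mul_prod_erase_sub [DecidableEq ι] {R : Type*} [CommRing R]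
    (a b : ι → R) (j : ι) (x : R) :
    (∏ i, (x - a i)) * ∏ i ∈ univ.erase j, (x - b i) =
      (x - a j) * ∏ i ∈ univ.erase j, ((x - a i) * (x - b i)) := by
  rw [← mul_prod_erase univ _ (mem_univ j), prod_mul_distrib, mul_assoc]

variable {m : ℕ} {a b : Fin m → K}

theorem sub_mul_sub_pos_of_interlaces (hint : Interlaces a b ∨ Interlaces b a) (i j : Fin m) :
    0 < (b i - a i) * (b j - a j) := by
  rcases hint with h | h
  · exact mul_pos (sub_pos.mpr (h i).1) (sub_pos.mpr (h j).1)
  · exact mul_pos_of_neg_of_neg (sub_neg.mpr (h i).1) (sub_neg.mpr (h j).1)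

theorem prod_erase_sub_mul_sub_pos
    (hsep : ∀ i j : Fin m, i < j → max (a i) (b i) < min (a j) (b j)) (j : Fin m) :
    0 < ∏ i ∈ univ.erase j, ((b j - a i) * (b j - b i)) := by
  refine prod_pos fun i hi => ?_
  rcases lt_or_gt_of_ne (ne_of_mem_erase hi) with hij | hji
  · have := hsep i j hij
    have := le_max_left (a i) (b i)
    have := le_max_right (a i) (b i)
    have := min_le_right (a j) (b j)
    exact mul_pos (by linarith) (by linarith)
  · have := hsep j i hji
    have := le_max_right (a j) (b j)
    have := min_le_left (a i) (b i)
    have := min_le_right (a i) (b i)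
    exact mul_pos_of_neg_of_neg (by linarith) (by linarith)

end Signs

section Forward

open Matrix Finset

theorem isDefinite_bezoutMatrix_of_interlaces {m : ℕ} {g h : ℝ[X]} {a b : Fin m → ℝ}
    (hm : 1 ≤ m) (hg : g.natDegree = m) (hh : h.natDegree = m) (ha : StrictMono a)
    (hb : StrictMono b) (hga : ∀ i, g.IsRoot (a i)) (hhb : ∀ i, h.IsRoot (b i))
    (hint : Interlaces a b ∨ Interlaces b a) : (bezoutMatrix ℝ m g h).IsDefinite := by
  have hV : IsUnit (vandermonde b) :=
    (isUnit_iff_isUnit_det _).mpr (det_vandermonde_ne_zero_iff.mpr hb.injective).isUnit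
  have hdiag : vandermonde b * bezoutMatrix ℝ m g h * star (vandermonde b) =
      diagonal fun j => (wronskian h g).eval (b j) := by
    ext i j
    rw [vandermonde_mul_mul_star_apply, dotProduct_bezoutMatrix_mulVec hm hg.le hh.le]
    rcases eq_or_ne i j with rfl | hij
    · rw [diagonal_apply_eq, evalEval_bezoutian_self]
    · have := mul_evalEval_bezoutian g h (b j) (b i)
      rw [(hhb i).eq_zero, (hhb j).eq_zero, mul_zero, mul_zero, sub_zero] at this
      rw [diagonal_apply_ne _ hij]
      exact (mul_eq_zero.mp this).resolve_left (sub_ne_zero.mpr (hb.injective.ne hij))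
  rw [← hV.isDefinite_star_right_conjugate_iff, hdiag]
  have hW : ∀ j, (wronskian h g).eval (b j) = -(g.leadingCoeff * h.leadingCoeff) *
      ((b j - a j) * ∏ i ∈ univ.erase j, ((b j - a i) * (b j - b i))) := fun j => by
    rw [← prod_sub_mul_prod_erase_sub, wronskian, eval_sub, eval_mul, eval_mul, (hhb j).eq_zero,
      eval_eq_leadingCoeff_mul_prod ha.injective hga (by simpa using hg),
      eval_derivative_eq_leadingCoeff_mul_prod_erase hb.injective hhb (by simpa using hh)]
    ring
  have hlc : g.leadingCoeff * h.leadingCoeff ≠ 0 :=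
    mul_ne_zero (leadingCoeff_ne_zero.mpr (ne_zero_of_natDegree_gt (n := 0) (by omega)))
      (leadingCoeff_ne_zero.mpr (ne_zero_of_natDegree_gt (n := 0) (by omega)))
  have hsep : ∀ i j : Fin m, i < j → max (a i) (b i) < min (a j) (b j) := fun _ _ =>
    max_lt_min_of_interlaces hint ha.monotone hb.monotone
  refine isDefinite_diagonal_of_mul_pos fun i j => ?_
  rw [hW, hW]
  calc (0 : ℝ) < (g.leadingCoeff * h.leadingCoeff) ^ 2 * ((b i - a i) * (b j - a j)) *
        ((∏ k ∈ univ.erase i, ((b i - a k) * (b i - b k))) *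
          ∏ k ∈ univ.erase j, ((b j - a k) * (b j - b k))) :=
      mul_pos (mul_pos (pow_two_pos_of_ne_zero hlc) (sub_mul_sub_pos_of_interlaces hint i j))
        (mul_pos (prod_erase_sub_mul_sub_pos hsep i) (prod_erase_sub_mul_sub_pos hsep j))
    _ = _ := by ring

end Forward

section Reverse

open Matrix

variable {m : ℕ} {p q : ℝ[X]}

theorem isDefinite_bezoutMatrix_swap (hdef : (bezoutMatrix ℝ m p q).IsDefinite) :
    (bezoutMatrix ℝ m q p).IsDefinite := by
  rw [← neg_bezoutMatrix]
  exact hdef.neg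

theorem eval_wronskian_mul_eval_wronskian_pos (hm : 1 ≤ m) (hp : p.natDegree ≤ m)
    (hq : q.natDegree ≤ m) (hdef : (bezoutMatrix ℝ m p q).IsDefinite) (x y : ℝ) :
    0 < (wronskian q p).eval x * (wronskian q p).eval y := by
  have hv : ∀ z : ℝ, (fun k : Fin m => z ^ (k : ℕ)) ≠ 0 := fun z h0 => by
    simpa using congrFun h0 ⟨0, hm⟩
  have := hdef.mul_dotProduct_mulVec_pos (hv x) (hv y)
  rwa [dotProduct_bezoutMatrix_mulVec hm hp hq, dotProduct_bezoutMatrix_mulVec hm hp hq,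
    evalEval_bezoutian_self, evalEval_bezoutian_self] at this

theorem eval_wronskian_ne_zero (hm : 1 ≤ m) (hp : p.natDegree ≤ m) (hq : q.natDegree ≤ m)
    (hdef : (bezoutMatrix ℝ m p q).IsDefinite) (x : ℝ) : (wronskian q p).eval x ≠ 0 :=
  fun h0 => by simpa [h0] using eval_wronskian_mul_eval_wronskian_pos hm hp hq hdef x x

theorem not_isRoot_and_isRoot_of_isDefinite (hm : 1 ≤ m) (hp : p.natDegree ≤ m)
    (hq : q.natDegree ≤ m) (hdef : (bezoutMatrix ℝ m p q).IsDefinite) (x : ℝ) :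
    ¬(p.IsRoot x ∧ q.IsRoot x) := fun ⟨hpx, hqx⟩ =>
  eval_wronskian_ne_zero hm hp hq hdef x (by simp [wronskian, hpx.eq_zero, hqx.eq_zero])

theorem nodup_roots_of_isDefinite (hm : 1 ≤ m) (hp : p.natDegree ≤ m) (hq : q.natDegree ≤ m)
    (hdef : (bezoutMatrix ℝ m p q).IsDefinite) : p.roots.Nodup := by
  rcases eq_or_ne p 0 with rfl | hp0
  · simp
  refine Multiset.nodup_iff_count_le_one.mpr fun x => ?_
  rw [count_roots]
  by_contra! hx
  obtain ⟨hpx, hp'x⟩ := (one_lt_rootMultiplicity_iff_isRoot hp0).mp hx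
  exact eval_wronskian_ne_zero hm hp hq hdef x (by simp [wronskian, hpx.eq_zero, hp'x.eq_zero])

theorem im_eq_zero_of_isDefinite (hm : 1 ≤ m) (hp : p.natDegree ≤ m) (hq : q.natDegree ≤ m)
    (hdef : (bezoutMatrix ℝ m p q).IsDefinite) {z : ℂ} (hz : aeval z p = 0) : z.im = 0 := by
  by_contra him
  have hz' : aeval ((starRingEnd ℂ) z) p = 0 := by rw [aeval_conj, hz, map_zero]
  have hbez := mul_evalEval_bezoutian (p.map (algebraMap ℝ ℂ)) (q.map (algebraMap ℝ ℂ))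
    ((starRingEnd ℂ) z) z
  simp only [eval_map_algebraMap, hz, hz', zero_mul, sub_zero, mul_eq_zero, sub_eq_zero] at hbez
  replace hbez := hbez.resolve_left fun h => him (Complex.conj_eq_iff_im.mp h.symm)
  rw [← dotProduct_bezoutMatrix_mulVec hm (natDegree_map_le.trans hp) (natDegree_map_le.trans hq),
    bezoutMatrix_map] at hbez
  have hw : (fun l : Fin m => (starRingEnd ℂ) z ^ (l : ℕ)) ≠ 0 := fun h0 => by
    simpa using congrFun h0 ⟨0, hm⟩
  refine hdef.star_dotProduct_map_algebraMap_mulVec_ne_zero hw (Eq.trans ?_ hbez)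
  congr 1
  ext k
  simp

theorem card_roots_of_isDefinite (hm : 1 ≤ m) (hp : p.natDegree = m) (hq : q.natDegree ≤ m)
    (hdef : (bezoutMatrix ℝ m p q).IsDefinite) : p.roots.card = m :=
  (card_roots_eq_natDegree_of_forall_im_eq_zero fun _ hz =>
    im_eq_zero_of_isDefinite hm hp.le hq hdef hz).trans hp

theorem exists_mem_Ioo_of_isDefinite (hm : 1 ≤ m) (hp : p.natDegree = m) (hq : q.natDegree ≤ m)
    (hdef : (bezoutMatrix ℝ m p q).IsDefinite) {a b : Fin m → ℝ} (ha : StrictMono a)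
    (hpa : ∀ i, p.IsRoot (a i)) (hqb : ∀ x, q.IsRoot x → x ∈ Set.range b) (i : Fin m)
    (h : (i : ℕ) + 1 < m) : ∃ j, b j ∈ Set.Ioo (a i) (a ⟨(i : ℕ) + 1, h⟩) := by
  set i' : Fin m := ⟨(i : ℕ) + 1, h⟩
  have hcov : i ⋖ i' := by simp [i', Fin.covBy_iff]
  have hlc : p.leadingCoeff ≠ 0 :=
    leadingCoeff_ne_zero.mpr (ne_zero_of_natDegree_gt (n := 0) (by omega))
  have hder : p.derivative.eval (a i) * p.derivative.eval (a i') < 0 := by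
    rw [eval_derivative_eq_leadingCoeff_mul_prod_erase ha.injective hpa (by simpa using hp),
      eval_derivative_eq_leadingCoeff_mul_prod_erase ha.injective hpa (by simpa using hp),
      mul_mul_mul_comm, ← sq]
    exact mul_neg_of_pos_of_neg (pow_two_pos_of_ne_zero hlc)
      (ha.prod_erase_sub_mul_prod_erase_sub_neg hcov)
  have hW := eval_wronskian_mul_eval_wronskian_pos hm hp.le hq hdef (a i) (a i')
  simp only [wronskian, eval_sub, eval_mul, (hpa _).eq_zero, mul_zero, sub_zero] at hW
  have hsign : q.eval (a i) * q.eval (a i') < 0 :=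
    neg_of_mul_pos_left (by linarith [hW]) hder.le
  obtain ⟨x, hx, hqx⟩ := exists_isRoot_mem_Ioo_of_eval_mul_eval_neg (ha hcov.lt).le hsign
  obtain ⟨j, rfl⟩ := hqb x hqx
  exact ⟨j, hx⟩

end Reverse

/-- Let `q1, q2 ∈ ℝ[u]` have degree exactly `m ≥ 1`. Then `B_m(q1,q2)`
is definite (positive or negative definite) iff all roots of `q1` and `q2` are real and
simple, `q1` and `q2` have no common root, and the roots strictly interlace (listed
together in increasing order they alternate between roots of `q1` and roots of `q2`). -/
theorem stmt13 (m : ℕ) (hm : 1 ≤ m) (q1 q2 : Polynomial ℝ)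
    (hq1 : q1.natDegree = m) (hq2 : q2.natDegree = m) :
    ((bezoutMatrix ℝ m q1 q2).PosDef ∨ (-(bezoutMatrix ℝ m q1 q2)).PosDef) ↔
      (q1.roots.card = m ∧ q1.roots.Nodup ∧
       q2.roots.card = m ∧ q2.roots.Nodup ∧
       (∀ x : ℝ, ¬ (q1.IsRoot x ∧ q2.IsRoot x)) ∧
       ∃ a b : Fin m → ℝ, StrictMono a ∧ StrictMono b ∧
         (∀ i, q1.IsRoot (a i)) ∧ (∀ i, q2.IsRoot (b i)) ∧
         ((∀ i : Fin m, a i < b i ∧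
            ∀ h : (i : ℕ) + 1 < m, b i < a ⟨(i : ℕ) + 1, h⟩) ∨
          (∀ i : Fin m, b i < a i ∧
            ∀ h : (i : ℕ) + 1 < m, a i < b ⟨(i : ℕ) + 1, h⟩))) := by
  constructor
  · intro hdef
    have hdef' := isDefinite_bezoutMatrix_swap hdef
    have hc1 := card_roots_of_isDefinite hm hq1 hq2.le hdef
    have hc2 := card_roots_of_isDefinite hm hq2 hq1.le hdef'
    have hn1 := nodup_roots_of_isDefinite hm hq1.le hq2.le hdef
    have hn2 := nodup_roots_of_isDefinite hm hq2.le hq1.le hdef'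
    have hcommon := not_isRoot_and_isRoot_of_isDefinite hm hq1.le hq2.le hdef
    obtain ⟨a, ha, hq1a, hq1range⟩ :=
      exists_strictMono_of_roots_nodup (ne_zero_of_natDegree_gt (n := 0) (by omega)) hc1 hn1
    obtain ⟨b, hb, hq2b, hq2range⟩ :=
      exists_strictMono_of_roots_nodup (ne_zero_of_natDegree_gt (n := 0) (by omega)) hc2 hn2
    refine ⟨hc1, hn1, hc2, hn2, hcommon, a, b, ha, hb, hq1a, hq2b,
      interlaces_or_interlaces ha hb (fun i j he => hcommon _ ⟨hq1a i, he ▸ hq2b j⟩)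
        (exists_mem_Ioo_of_isDefinite hm hq1 hq2.le hdef ha hq1a hq2range)
        (exists_mem_Ioo_of_isDefinite hm hq2 hq1.le hdef' hb hq2b hq1range)⟩
  · rintro ⟨-, -, -, -, -, a, b, ha, hb, hq1a, hq2b, hint⟩
    exact isDefinite_bezoutMatrix_of_interlaces hm hq1 hq2 ha hb hq1a hq2b hint
end
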